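/- Let ε, T, B > 0 and M > 1 be real numbers. Let F ∈ C¹([0,T]) and g ∈ C([0,T]) be nonnegative functions with ∫_0^T g(t) dt ≤ B, F(0) ≤ ε, and F'(t) ≤ g(t)(ε + F(t) + F(t)^M) for all t ∈ [0,T]. If ε ≤ (3e^B)^{−M/(M−1)}, then F(t) ≤ 3ε e^B for all t ∈ [0,T]. -/

import Mathlib

open MeasureTheory Real

/-!
Put `K = 3εe^B`. The smallness of `ε` is exactly what makes `K ^ M ≤ ε`, so as long as
`F < K` the function `2ε + F` obeys the linear inequality `(2ε + F)' ≤ g (2ε + F)`, and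
Gronwall's inequality gives `2ε + F ≤ 3ε e^{∫ g} ≤ K`. Thus `F ≤ K - 2ε` at any time before
which `F < K`, so `F` can never reach `K`.
-/

open Set

theorem mul_rpow_le_of_le_rpow_neg {a ε M : ℝ} (ha : 0 < a) (hε : 0 < ε) (hM : 1 < M)
    (h : ε ≤ a ^ (-(M / (M - 1)))) : (a * ε) ^ M ≤ ε := by
  have hε' : ε ^ (M - 1) ≤ a ^ (-M) :=
    calc ε ^ (M - 1) ≤ (a ^ (-(M / (M - 1)))) ^ (M - 1) := by gcongr
      _ = a ^ (-M) := by
        rw [← rpow_mul ha.le]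
        congr 1
        field_simp [(sub_pos.2 hM).ne']
  calc (a * ε) ^ M = a ^ M * ε ^ (M - 1) * ε := by
        rw [mul_rpow ha.le hε.le, mul_assoc, ← rpow_add_one hε.ne', sub_add_cancel]
    _ ≤ a ^ M * a ^ (-M) * ε := by gcongr
    _ = ε := by rw [← rpow_add ha, add_neg_cancel, rpow_zero, one_mul]

theorem ContinuousOn.hasDerivAt_primitive {E : Type*} [NormedAddCommGroup E] [NormedSpace ℝ E]
    [CompleteSpace E] {g : ℝ → E} {a b x : ℝ} (hg : ContinuousOn g (Icc a b))
    (hx : x ∈ Ioo a b) : HasDerivAt (fun t ↦ ∫ s in a..t, g s) (g x) x :=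
  intervalIntegral.integral_hasDerivAt_right
    ((hg.mono (Icc_subset_Icc_right hx.2.le)).intervalIntegrable_of_Icc hx.1.le)
    ((hg.mono Ioo_subset_Icc_self).stronglyMeasurableAtFilter isOpen_Ioo x hx)
    (hg.continuousAt (Icc_mem_nhds hx.1 hx.2))

theorem le_mul_exp_integral_of_hasDerivAt_le_mul {u u' g : ℝ → ℝ} {a b : ℝ} (hab : a ≤ b)
    (hu : ContinuousOn u (Icc a b)) (hg : ContinuousOn g (Icc a b))
    (hu' : ∀ x ∈ Ioo a b, HasDerivAt u (u' x) x) (hle : ∀ x ∈ Ioo a b, u' x ≤ g x * u x) :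
    u b ≤ u a * exp (∫ x in a..b, g x) := by
  set G : ℝ → ℝ := fun t ↦ ∫ s in a..t, g s
  have hG : ContinuousOn G (Icc a b) := by
    have := intervalIntegral.continuousOn_primitive_interval (f := g) (μ := volume)
      (by rw [uIcc_of_le hab]; exact hg.integrableOn_Icc)
    rwa [uIcc_of_le hab] at this
  have hanti : AntitoneOn (fun t ↦ u t * exp (-G t)) (Icc a b) := by
    refine antitoneOn_of_hasDerivWithinAt_nonpos (convex_Icc a b) (hu.mul hG.neg.rexp)
      (f' := fun x ↦ (u' x - g x * u x) * exp (-G x)) (fun x hx ↦ ?_) (fun x hx ↦ ?_)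
    · rw [interior_Icc] at hx
      exact ((hu' x hx).mul (hg.hasDerivAt_primitive hx).neg.exp).hasDerivWithinAt.congr_deriv
        (by simp only [G, Pi.neg_apply]; ring)
    · rw [interior_Icc] at hx
      exact mul_nonpos_of_nonpos_of_nonneg (sub_nonpos.2 (hle x hx)) (exp_pos _).le
  have hba := hanti (left_mem_Icc.2 hab) (right_mem_Icc.2 hab) hab
  simp only [G, intervalIntegral.integral_same, neg_zero, exp_zero, mul_one] at hba
  calc u b = u b * exp (-G b) * exp (G b) := by
        rw [mul_assoc, ← exp_add, neg_add_cancel, exp_zero, mul_one]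
    _ ≤ u a * exp (G b) := by gcongr

theorem ContinuousOn.forall_lt_of_forall_Ico_lt {α β : Type*}
    [ConditionallyCompleteLinearOrder α] [TopologicalSpace α] [OrderTopology α]
    [LinearOrder β] [TopologicalSpace β] [OrderClosedTopology β] {f : α → β} {a b : α} {K : β}
    (hf : ContinuousOn f (Icc a b)) (hstep : ∀ c ∈ Icc a b, (∀ s ∈ Ico a c, f s < K) → f c < K) :
    ∀ t ∈ Icc a b, f t < K := by
  set S := Icc a b ∩ f ⁻¹' Ici K
  by_contra! hS
  obtain ⟨t, ht, hKt⟩ := hS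
  have hSne : S.Nonempty := ⟨t, ht, hKt⟩
  have hSbdd : BddBelow S := ⟨a, fun s hs ↦ hs.1.1⟩
  obtain ⟨hc, hKc⟩ : sInf S ∈ S :=
    (hf.preimage_isClosed_of_isClosed isClosed_Icc isClosed_Ici).csInf_mem hSne hSbdd
  refine (hstep _ hc fun s hs ↦ ?_).not_ge hKc
  by_contra! hKs
  exact (csInf_le hSbdd ⟨⟨hs.1, hs.2.le.trans hc.2⟩, hKs⟩).not_gt hs.2

theorem nonlinear_gronwall_general (ε T B M : ℝ) (hε : 0 < ε)
    (hM : 1 < M) (F F' g : ℝ → ℝ)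
    (hF' : ∀ t ∈ Set.Icc 0 T, HasDerivWithinAt F (F' t) (Set.Icc 0 T) t)
    (hgcont : ContinuousOn g (Set.Icc 0 T))
    (hFpos : ∀ t ∈ Set.Icc 0 T, 0 ≤ F t)
    (hgpos : ∀ t ∈ Set.Icc 0 T, 0 ≤ g t)
    (hgint : ∫ t in (0 : ℝ)..T, g t ≤ B)
    (hF0 : F 0 ≤ ε)
    (hode : ∀ t ∈ Set.Icc 0 T, F' t ≤ g t * (ε + F t + F t ^ M))
    (hsmall : ε ≤ (3 * Real.exp B) ^ (-(M / (M - 1)))) :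
    ∀ t ∈ Set.Icc 0 T, F t ≤ 3 * ε * Real.exp B := by
  set K := 3 * ε * exp B
  have hpow : ∀ x, 0 ≤ x → x ≤ K → x ^ M ≤ ε := fun x hx hxK ↦
    (rpow_le_rpow hx hxK (by linarith)).trans <| by
      simpa only [K, mul_right_comm] using mul_rpow_le_of_le_rpow_neg (by positivity) hε hM hsmall
  have hFcont : ContinuousOn F (Icc 0 T) := fun t ht ↦ (hF' t ht).continuousWithinAt
  have hstep : ∀ c ∈ Icc 0 T, (∀ s ∈ Ico 0 c, F s < K) → F c < K := by
    intro c hc hlt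
    have hsub : Icc 0 c ⊆ Icc 0 T := Icc_subset_Icc_right hc.2
    have hlin : ∀ x ∈ Ioo 0 c, F' x ≤ g x * (2 * ε + F x) := fun x hx ↦ by
      have hxT : x ∈ Icc 0 T := hsub (Ioo_subset_Icc_self hx)
      have := hpow (F x) (hFpos x hxT) (hlt x ⟨hx.1.le, hx.2⟩).le
      exact (hode x hxT).trans (mul_le_mul_of_nonneg_left (by linarith) (hgpos x hxT))
    have hgronwall : 2 * ε + F c ≤ (2 * ε + F 0) * exp (∫ s in 0..c, g s) :=
      le_mul_exp_integral_of_hasDerivAt_le_mul hc.1 (continuousOn_const.add (hFcont.mono hsub))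
        (hgcont.mono hsub)
        (fun x hx ↦ ((hF' x (hsub (Ioo_subset_Icc_self hx))).hasDerivAt
          (Icc_mem_nhds hx.1 (hx.2.trans_le hc.2))).const_add _) hlin
    have hint : ∫ s in 0..c, g s ≤ B :=
      (intervalIntegral.integral_mono_interval le_rfl hc.1 hc.2
        (ae_restrict_of_forall_mem measurableSet_Ioc fun s hs ↦ hgpos s (Ioc_subset_Icc_self hs))
        (hgcont.intervalIntegrable_of_Icc (hc.1.trans hc.2))).trans hgint
    have hbound : (2 * ε + F 0) * exp (∫ s in 0..c, g s) ≤ 3 * ε * exp B := by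
      gcongr
      linarith
    linarith
  exact fun t ht ↦ (hFcont.forall_lt_of_forall_Ico_lt hstep t ht).le

/-- nonlinear Gronwall-type lemma. -/
theorem nonlinear_gronwall (ε T B M : ℝ) (hε : 0 < ε) (hT : 0 < T) (hB : 0 < B)
    (hM : 1 < M) (F F' g : ℝ → ℝ)
    (hF' : ∀ t ∈ Set.Icc 0 T, HasDerivWithinAt F (F' t) (Set.Icc 0 T) t)
    (hF'cont : ContinuousOn F' (Set.Icc 0 T))
    (hgcont : ContinuousOn g (Set.Icc 0 T))
    (hFpos : ∀ t ∈ Set.Icc 0 T, 0 ≤ F t)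
    (hgpos : ∀ t ∈ Set.Icc 0 T, 0 ≤ g t)
    (hgint : ∫ t in (0 : ℝ)..T, g t ≤ B)
    (hF0 : F 0 ≤ ε)
    (hode : ∀ t ∈ Set.Icc 0 T, F' t ≤ g t * (ε + F t + F t ^ M))
    (hsmall : ε ≤ (3 * Real.exp B) ^ (-(M / (M - 1)))) :
    ∀ t ∈ Set.Icc 0 T, F t ≤ 3 * ε * Real.exp B :=
  nonlinear_gronwall_general ε T B M hε hM F F' g hF' hgcont hFpos hgpos hgint hF0 hode hsmall
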